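/- Let φ : ℝ → ℝ satisfy the activation assumption, and let m ∈ ℕ₀. Then the function φ_m := φ − Σ_{k=0}^{m−1} Δ_k(φ)·s_k is m times pseudo-differentiable, and its m-fold pseudo-derivative φ_m^{(m)} lies in L²(γ). -/

import Mathlib

/-! Away from `0`, `φ⁽ⁱ⁾` is a primitive of `φ⁽ⁱ⁺¹⁾`, which is locally integrable thanks to its
polynomial bound. Hence `φ⁽ⁱ⁾` has one-sided limits at `0`, and once its value at `0` is the
average of the two, `φ⁽ⁱ⁾(x) = φ⁽ⁱ⁾(0) + Δᵢ s₀(x) + ∫₀ˣ φ⁽ⁱ⁺¹⁾` for every `x`. Since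
`∫₀ˣ s_k = s_{k+1}`, the functions `φ⁽ⁱ⁾ − Σ_{i ≤ k < m} Δ_k s_{k−i}` form a chain of
pseudo-derivatives from `φ_m` to `φ⁽ᵐ⁾`, and `φ⁽ᵐ⁾ ∈ L²(γ)` because Gaussian measures have moments
of all orders. -/

open MeasureTheory ProbabilityTheory Filter Set

noncomputable section

/-- The standard Gaussian measure `N(0,1)` on `ℝ`. -/
def stdGaussian : Measure ℝ := gaussianReal 0 1

/-- `g` is a pseudo-derivative of `f`. -/
def IsPseudoDeriv (f g : ℝ → ℝ) : Prop :=
  (∀ a b : ℝ, IntegrableOn g (Set.Icc a b) volume) ∧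
  ∀ x : ℝ, f x = f 0 + ∫ t in (0:ℝ)..x, g t

/-- `g` is an `m`-fold pseudo-derivative of `f`. -/
def IsIterPseudoDeriv (m : ℕ) (f g : ℝ → ℝ) : Prop :=
  ∃ gs : ℕ → ℝ → ℝ, gs 0 = f ∧ gs m = g ∧ ∀ i < m, IsPseudoDeriv (gs i) (gs (i + 1))

/-- The reference activation `s_k(x) = sgn(x) x^k / (2 k!)`. -/
def refAct (k : ℕ) (x : ℝ) : ℝ := Real.sign x * x ^ k / (2 * k.factorial)

/-- The activation assumption: `φ` is smooth with polynomially bounded derivatives away from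
zero (on `(0,∞)` and on `(−∞,0)`), `φ(0)` is the average of the one-sided limits at `0`,
and `φ` is not the zero function. -/
def IsActivation (φ : ℝ → ℝ) : Prop :=
  ContDiffOn ℝ (⊤ : ℕ∞) φ (Set.Ioi (0 : ℝ)) ∧
  ContDiffOn ℝ (⊤ : ℕ∞) φ (Set.Iio (0 : ℝ)) ∧
  (∀ m : ℕ, ∃ a b q : ℝ, 0 < a ∧ 0 < b ∧ 0 < q ∧
    ∀ x : ℝ, 0 < x →
      |iteratedDerivWithin m φ (Set.Ioi (0 : ℝ)) x| ≤ a * |x| ^ q + b) ∧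
  (∀ m : ℕ, ∃ a b q : ℝ, 0 < a ∧ 0 < b ∧ 0 < q ∧
    ∀ x : ℝ, x < 0 →
      |iteratedDerivWithin m φ (Set.Iio (0 : ℝ)) x| ≤ a * |x| ^ q + b) ∧
  φ 0 = (limUnder (nhdsWithin 0 (Set.Ioi (0 : ℝ))) φ +
         limUnder (nhdsWithin 0 (Set.Iio (0 : ℝ))) φ) / 2 ∧
  φ ≠ 0

/-- `Δ_k(φ) = φ^{(k)}(0+) − φ^{(k)}(0−)`, the jump of the `k`-th derivative at zero. -/
def deltaK (φ : ℝ → ℝ) (k : ℕ) : ℝ :=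
  limUnder (nhdsWithin 0 (Set.Ioi (0 : ℝ)))
      (iteratedDerivWithin k φ (Set.Ioi (0 : ℝ))) -
  limUnder (nhdsWithin 0 (Set.Iio (0 : ℝ)))
      (iteratedDerivWithin k φ (Set.Iio (0 : ℝ)))

open intervalIntegral Topology
open scoped NNReal ENNReal

lemma refAct_apply_zero (k : ℕ) : refAct k 0 = 0 := by
  simp [refAct]

lemma abs_refAct_le (k : ℕ) (x : ℝ) : |refAct k x| ≤ |x| ^ k := by
  have hfac : (1 : ℝ) ≤ 2 * k.factorial := by
    have : (1 : ℝ) ≤ k.factorial := mod_cast k.factorial_pos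
    linarith
  have hsign : |Real.sign x| ≤ 1 := by
    rcases Real.sign_apply_eq x with h | h | h <;> simp [h]
  rw [refAct, abs_div, abs_mul, abs_pow, abs_of_pos (by positivity : (0 : ℝ) < 2 * k.factorial)]
  refine div_le_of_le_mul₀ (by positivity) (by positivity) ?_
  rw [mul_comm]
  exact mul_le_mul_of_nonneg_left (hsign.trans hfac) (by positivity)

lemma measurable_refAct (k : ℕ) : Measurable (refAct k) := by
  have hsign : Measurable Real.sign :=
    Measurable.ite measurableSet_Iio measurable_const
      (Measurable.ite measurableSet_Ioi measurable_const measurable_const)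
  exact (hsign.mul (measurable_id.pow_const k)).div_const _

lemma locallyIntegrable_refAct (k : ℕ) : LocallyIntegrable (refAct k) :=
  (continuous_abs.pow k).locallyIntegrable.mono (measurable_refAct k).aestronglyMeasurable
    (ae_of_all _ fun x => by simpa [Real.norm_eq_abs] using abs_refAct_le k x)

lemma integral_refAct (k : ℕ) (x : ℝ) : ∫ t in (0 : ℝ)..x, refAct k t = refAct (k + 1) x := by
  have hsign : ∀ᵐ t, t ∈ Set.uIoc 0 x → refAct k t = Real.sign x * t ^ k / (2 * k.factorial) := by
    filter_upwards [Measure.ae_ne volume 0] with t ht hmem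
    rcases lt_trichotomy x 0 with hx | rfl | hx
    · rw [uIoc_of_ge hx.le] at hmem
      rw [refAct, Real.sign_of_neg hx, Real.sign_of_neg (lt_of_le_of_ne hmem.2 ht)]
    · simp at hmem
    · rw [uIoc_of_le hx.le] at hmem
      rw [refAct, Real.sign_of_pos hx, Real.sign_of_pos hmem.1]
  rw [integral_congr_ae hsign, intervalIntegral.integral_div, intervalIntegral.integral_const_mul,
    integral_pow, refAct, Nat.factorial_succ]
  push_cast
  field_simp
  ring

theorem MeasureTheory.LocallyIntegrable.intervalIntegrable {E : Type*} [NormedAddCommGroup E]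
    {f : ℝ → E} {μ : Measure ℝ} (hf : LocallyIntegrable f μ) (a b : ℝ) :
    IntervalIntegrable f μ a b :=
  (hf.integrableOn_isCompact isCompact_uIcc).intervalIntegrable

theorem isIterPseudoDeriv_sub_sum_refAct {D : ℕ → ℝ → ℝ} {δ : ℕ → ℝ}
    (hD : ∀ i, LocallyIntegrable (D i))
    (hstep : ∀ i x, D i x = D i 0 + δ i * refAct 0 x + ∫ t in (0 : ℝ)..x, D (i + 1) t) (m : ℕ) :
    IsIterPseudoDeriv m (fun x => D 0 x - ∑ k ∈ Finset.range m, δ k * refAct k x) (D m) := by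
  have hterm : ∀ i j, LocallyIntegrable fun x => δ (i + j) * refAct j x :=
    fun i j => (locallyIntegrable_refAct j).smul (δ (i + j))
  have hsum : ∀ i n, LocallyIntegrable fun x => ∑ j ∈ Finset.range n, δ (i + j) * refAct j x :=
    fun i n => locallyIntegrable_finsetSum _ fun j _ => hterm i j
  refine ⟨fun i x => D i x - ∑ j ∈ Finset.range (m - i), δ (i + j) * refAct j x,
    by simp, by simp, fun i hi => ⟨fun a b => ?_, fun x => ?_⟩⟩
  · exact ((hD (i + 1)).sub (hsum _ _)).integrableOn_isCompact isCompact_Icc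
  · obtain ⟨n, hn⟩ : ∃ n, m - i = n + 1 := ⟨m - (i + 1), by omega⟩
    have hn' : m - (i + 1) = n := by omega
    simp only [hn, hn', Finset.sum_range_succ']
    rw [intervalIntegral.integral_sub ((hD _).intervalIntegrable 0 x)
      ((hsum _ _).intervalIntegrable 0 x), intervalIntegral.integral_finsetSum
      fun j _ => (hterm _ j).intervalIntegrable 0 x, hstep i x]
    simp only [refAct_apply_zero, mul_zero, Finset.sum_const_zero, add_zero, sub_zero,
      intervalIntegral.integral_const_mul, integral_refAct, add_assoc, add_comm 1]
    ring

theorem exists_tendsto_nhdsWithin_and_eq_add_integral {f g : ℝ → ℝ} {s : Set ℝ}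
    (hs : s.OrdConnected) (hne : s.Nonempty) (hf : ∀ x ∈ s, HasDerivAt f (g x) x)
    (hg : LocallyIntegrable g) (c : ℝ) :
    ∃ L, Tendsto f (𝓝[s] c) (𝓝 L) ∧ ∀ x ∈ s, f x = L + ∫ t in c..x, g t := by
  obtain ⟨a, ha⟩ := hne
  have heq : ∀ x ∈ s, f x = (f a - ∫ t in c..a, g t) + ∫ t in c..x, g t := fun x hx => by
    have hftc : ∫ t in a..x, g t = f x - f a :=
      integral_eq_sub_of_hasDerivAt (fun y hy => hf y (hs.uIcc_subset ha hx hy))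
        (hg.intervalIntegrable a x)
    rw [← integral_add_adjacent_intervals (hg.intervalIntegrable c a)
      (hg.intervalIntegrable a x), hftc]
    ring
  refine ⟨_, ?_, heq⟩
  have hprim := (continuous_primitive hg.intervalIntegrable c).tendsto c
  rw [integral_same] at hprim
  simpa using ((tendsto_const_nhds.add hprim).mono_left nhdsWithin_le_nhds).congr'
    (eventually_nhdsWithin_of_forall fun x hx => (heq x hx).symm)

theorem exists_tendsto_and_eq_jump_add_integral {f g : ℝ → ℝ}
    (hf : ∀ x ≠ 0, HasDerivAt f (g x) x) (hg : LocallyIntegrable g) :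
    ∃ Lpos Lneg, Tendsto f (𝓝[>] 0) (𝓝 Lpos) ∧ Tendsto f (𝓝[<] 0) (𝓝 Lneg) ∧
      ∀ x ≠ 0, f x = (Lpos + Lneg) / 2 + (Lpos - Lneg) * refAct 0 x + ∫ t in (0 : ℝ)..x, g t := by
  obtain ⟨Lpos, hLpos, heqpos⟩ := exists_tendsto_nhdsWithin_and_eq_add_integral ordConnected_Ioi
    nonempty_Ioi (fun x hx => hf x (ne_of_gt hx)) hg 0
  obtain ⟨Lneg, hLneg, heqneg⟩ := exists_tendsto_nhdsWithin_and_eq_add_integral ordConnected_Iio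
    nonempty_Iio (fun x hx => hf x (ne_of_lt hx)) hg 0
  refine ⟨Lpos, Lneg, hLpos, hLneg, fun x hx => ?_⟩
  rcases hx.lt_or_gt with hx | hx
  · rw [heqneg x hx, refAct, Real.sign_of_neg hx]
    ring
  · rw [heqpos x hx, refAct, Real.sign_of_pos hx]
    ring

theorem hasDerivAt_iteratedDeriv_of_contDiffOn {𝕜 F : Type*} [NontriviallyNormedField 𝕜]
    [NormedAddCommGroup F] [NormedSpace 𝕜 F] {f : 𝕜 → F} {s : Set 𝕜} {n : WithTop ℕ∞} {i : ℕ}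
    (hs : IsOpen s) (hf : ContDiffOn 𝕜 n f s) (hi : (i : WithTop ℕ∞) < n) {x : 𝕜} (hx : x ∈ s) :
    HasDerivAt (iteratedDeriv i f) (iteratedDeriv (i + 1) f x) x := by
  have hdiff := (hf.differentiableOn_iteratedDerivWithin hi hs.uniqueDiffOn x hx).differentiableAt
    (hs.mem_nhds hx)
  rw [iteratedDeriv_succ]
  exact (hdiff.congr_of_eventuallyEq
    ((iteratedDerivWithin_of_isOpen hs).eventuallyEq_of_mem (hs.mem_nhds hx)).symm).hasDerivAt

theorem memLp_abs_rpow_gaussianReal {μ : ℝ} {v : ℝ≥0} (p : ℝ≥0) {q : ℝ} (hq : 0 < q) :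
    MemLp (fun x => |x| ^ q) p (gaussianReal μ v) := by
  lift q to ℝ≥0 using hq.le
  have hq0 : (q : ℝ≥0∞) ≠ 0 := by exact_mod_cast hq.ne'
  have := (memLp_id_gaussianReal (μ := μ) (v := v) (p * q)).norm_rpow_div q
  rwa [ENNReal.coe_mul, ENNReal.mul_div_cancel_right hq0 ENNReal.coe_ne_top,
    ENNReal.coe_toReal] at this

theorem exists_continuous_memLp_majorant_of_rpow_bound {f : ℝ → ℝ}
    (hpos : ∃ a b q : ℝ, 0 < a ∧ 0 < b ∧ 0 < q ∧ ∀ x, 0 < x → |f x| ≤ a * |x| ^ q + b)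
    (hneg : ∃ a b q : ℝ, 0 < a ∧ 0 < b ∧ 0 < q ∧ ∀ x, x < 0 → |f x| ≤ a * |x| ^ q + b) :
    ∃ g : ℝ → ℝ, Continuous g ∧ (∀ (p : ℝ≥0) (μ : ℝ) (v : ℝ≥0), MemLp g p (gaussianReal μ v)) ∧
      ∀ x ≠ 0, |f x| ≤ g x := by
  obtain ⟨a₁, b₁, q₁, ha₁, hb₁, hq₁, h₁⟩ := hpos
  obtain ⟨a₂, b₂, q₂, ha₂, hb₂, hq₂, h₂⟩ := hneg
  refine ⟨fun x => (a₁ * |x| ^ q₁ + b₁) + (a₂ * |x| ^ q₂ + b₂),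
    by fun_prop (disch := positivity), fun p μ v => ?_, fun x hx => ?_⟩
  · have hmem : ∀ a b q : ℝ, 0 < q → MemLp (fun x : ℝ => a * |x| ^ q + b) p (gaussianReal μ v) :=
      fun a b q hq => ((memLp_abs_rpow_gaussianReal p hq).const_mul a).add (memLp_const b)
    exact (hmem a₁ b₁ q₁ hq₁).add (hmem a₂ b₂ q₂ hq₂)
  · have hnonneg : ∀ a b q : ℝ, 0 < a → 0 < b → 0 ≤ a * |x| ^ q + b := fun a b q ha hb => by
      positivity
    rcases hx.lt_or_gt with hx | hx
    · linarith [h₂ x hx, hnonneg a₁ b₁ q₁ ha₁ hb₁]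
    · linarith [h₁ x hx, hnonneg a₂ b₂ q₂ ha₂ hb₂]

theorem locallyIntegrable_of_abs_le_of_continuousOn_compl_zero {f g : ℝ → ℝ}
    (hf : ContinuousOn f {0}ᶜ) (hg : Continuous g) (hfg : ∀ x ≠ 0, |f x| ≤ g x) :
    LocallyIntegrable f :=
  hg.locallyIntegrable.mono (measurable_of_continuousOn_compl_singleton 0 hf).aestronglyMeasurable
    (by filter_upwards [Measure.ae_ne volume 0] with x hx using (hfg x hx).trans (le_abs_self _))

theorem memLp_gaussianReal_of_abs_le_of_continuousOn_compl_zero {f g : ℝ → ℝ} {p : ℝ≥0∞} {μ : ℝ}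
    {v : ℝ≥0} (hv : v ≠ 0) (hf : ContinuousOn f {0}ᶜ) (hg : MemLp g p (gaussianReal μ v))
    (hfg : ∀ x ≠ 0, |f x| ≤ g x) : MemLp f p (gaussianReal μ v) :=
  hg.of_le (measurable_of_continuousOn_compl_singleton 0 hf).aestronglyMeasurable
    (by filter_upwards [(gaussianReal_absolutelyContinuous μ hv).ae_le (Measure.ae_ne volume 0)]
      with x hx using (hfg x hx).trans (le_abs_self _))

section Activation

variable {φ : ℝ → ℝ}

def HasPolyBoundedIteratedDerivWithin (φ : ℝ → ℝ) (s : Set ℝ) : Prop :=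
  ∀ m : ℕ, ∃ a b q : ℝ, 0 < a ∧ 0 < b ∧ 0 < q ∧
    ∀ x ∈ s, |iteratedDerivWithin m φ s x| ≤ a * |x| ^ q + b

theorem hasDerivAt_iteratedDeriv_of_ne_zero (hpos : ContDiffOn ℝ (⊤ : ℕ∞) φ (Ioi 0))
    (hneg : ContDiffOn ℝ (⊤ : ℕ∞) φ (Iio 0)) (i : ℕ) {x : ℝ} (hx : x ≠ 0) :
    HasDerivAt (iteratedDeriv i φ) (iteratedDeriv (i + 1) φ x) x := by
  have hi : (i : WithTop ℕ∞) < ((⊤ : ℕ∞) : WithTop ℕ∞) := by exact_mod_cast ENat.natCast_lt_top i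
  rcases hx.lt_or_gt with hx | hx
  · exact hasDerivAt_iteratedDeriv_of_contDiffOn isOpen_Iio hneg hi hx
  · exact hasDerivAt_iteratedDeriv_of_contDiffOn isOpen_Ioi hpos hi hx

theorem continuousOn_iteratedDeriv_compl_zero (hpos : ContDiffOn ℝ (⊤ : ℕ∞) φ (Ioi 0))
    (hneg : ContDiffOn ℝ (⊤ : ℕ∞) φ (Iio 0)) (i : ℕ) : ContinuousOn (iteratedDeriv i φ) {0}ᶜ :=
  fun _ hx => (hasDerivAt_iteratedDeriv_of_ne_zero hpos hneg i hx).continuousAt.continuousWithinAt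

theorem exists_continuous_majorant_iteratedDeriv
    (hbpos : HasPolyBoundedIteratedDerivWithin φ (Ioi 0))
    (hbneg : HasPolyBoundedIteratedDerivWithin φ (Iio 0)) (i : ℕ) :
    ∃ g : ℝ → ℝ, Continuous g ∧ (∀ (p : ℝ≥0) (μ : ℝ) (v : ℝ≥0), MemLp g p (gaussianReal μ v)) ∧
      ∀ x ≠ 0, |iteratedDeriv i φ x| ≤ g x := by
  obtain ⟨a₁, b₁, q₁, ha₁, hb₁, hq₁, h₁⟩ := hbpos i
  obtain ⟨a₂, b₂, q₂, ha₂, hb₂, hq₂, h₂⟩ := hbneg i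
  refine exists_continuous_memLp_majorant_of_rpow_bound
    ⟨a₁, b₁, q₁, ha₁, hb₁, hq₁, fun x hx => ?_⟩ ⟨a₂, b₂, q₂, ha₂, hb₂, hq₂, fun x hx => ?_⟩
  · rw [← iteratedDerivWithin_of_isOpen isOpen_Ioi hx]
    exact h₁ x hx
  · rw [← iteratedDerivWithin_of_isOpen isOpen_Iio hx]
    exact h₂ x hx

-- The one-sided limits are written as in `deltaK` and `IsActivation`, so that both rewrite.
def iteratedDerivAvg (φ : ℝ → ℝ) (i : ℕ) : ℝ → ℝ :=
  Function.update (iteratedDeriv i φ) 0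
    ((limUnder (𝓝[>] 0) (iteratedDerivWithin i φ (Ioi 0)) +
      limUnder (𝓝[<] 0) (iteratedDerivWithin i φ (Iio 0))) / 2)

theorem iteratedDerivAvg_zero
    (h0 : φ 0 = (limUnder (𝓝[>] 0) φ + limUnder (𝓝[<] 0) φ) / 2) :
    iteratedDerivAvg φ 0 = φ := by
  simp only [iteratedDerivAvg, iteratedDeriv_zero, iteratedDerivWithin_zero, ← h0,
    Function.update_eq_self]

theorem iteratedDerivAvg_ae_eq (i : ℕ) : iteratedDerivAvg φ i =ᵐ[volume] iteratedDeriv i φ := by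
  filter_upwards [Measure.ae_ne volume 0] with x hx using Function.update_of_ne hx _ _

theorem locallyIntegrable_iteratedDerivAvg (hpos : ContDiffOn ℝ (⊤ : ℕ∞) φ (Ioi 0))
    (hneg : ContDiffOn ℝ (⊤ : ℕ∞) φ (Iio 0)) (hbpos : HasPolyBoundedIteratedDerivWithin φ (Ioi 0))
    (hbneg : HasPolyBoundedIteratedDerivWithin φ (Iio 0)) (i : ℕ) :
    LocallyIntegrable (iteratedDerivAvg φ i) := by
  obtain ⟨g, hg, -, hle⟩ := exists_continuous_majorant_iteratedDeriv hbpos hbneg i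
  exact (locallyIntegrable_of_abs_le_of_continuousOn_compl_zero
    (continuousOn_iteratedDeriv_compl_zero hpos hneg i) hg hle).congr
      (iteratedDerivAvg_ae_eq i).symm

theorem memLp_iteratedDerivAvg (hpos : ContDiffOn ℝ (⊤ : ℕ∞) φ (Ioi 0))
    (hneg : ContDiffOn ℝ (⊤ : ℕ∞) φ (Iio 0)) (hbpos : HasPolyBoundedIteratedDerivWithin φ (Ioi 0))
    (hbneg : HasPolyBoundedIteratedDerivWithin φ (Iio 0)) (i : ℕ) (p : ℝ≥0) {μ : ℝ} {v : ℝ≥0}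
    (hv : v ≠ 0) : MemLp (iteratedDerivAvg φ i) p (gaussianReal μ v) := by
  obtain ⟨g, -, hg, hle⟩ := exists_continuous_majorant_iteratedDeriv hbpos hbneg i
  exact (memLp_gaussianReal_of_abs_le_of_continuousOn_compl_zero hv
    (continuousOn_iteratedDeriv_compl_zero hpos hneg i) (hg p μ v) hle).ae_eq
    ((gaussianReal_absolutelyContinuous μ hv).ae_eq (iteratedDerivAvg_ae_eq i).symm)

theorem iteratedDerivAvg_eq_jump_add_integral (hpos : ContDiffOn ℝ (⊤ : ℕ∞) φ (Ioi 0))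
    (hneg : ContDiffOn ℝ (⊤ : ℕ∞) φ (Iio 0)) (hbpos : HasPolyBoundedIteratedDerivWithin φ (Ioi 0))
    (hbneg : HasPolyBoundedIteratedDerivWithin φ (Iio 0)) (i : ℕ) (x : ℝ) :
    iteratedDerivAvg φ i x = iteratedDerivAvg φ i 0 + deltaK φ i * refAct 0 x +
      ∫ t in (0 : ℝ)..x, iteratedDerivAvg φ (i + 1) t := by
  obtain ⟨Lpos, Lneg, hLpos, hLneg, heq⟩ := exists_tendsto_and_eq_jump_add_integral
    (fun x hx => hasDerivAt_iteratedDeriv_of_ne_zero hpos hneg i hx)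
    ((locallyIntegrable_iteratedDerivAvg hpos hneg hbpos hbneg (i + 1)).congr
      (iteratedDerivAvg_ae_eq (i + 1)))
  have hlimpos : limUnder (𝓝[>] 0) (iteratedDerivWithin i φ (Ioi 0)) = Lpos :=
    (hLpos.congr' ((iteratedDerivWithin_of_isOpen isOpen_Ioi).eventuallyEq_of_mem
      self_mem_nhdsWithin).symm).limUnder_eq
  have hlimneg : limUnder (𝓝[<] 0) (iteratedDerivWithin i φ (Iio 0)) = Lneg :=
    (hLneg.congr' ((iteratedDerivWithin_of_isOpen isOpen_Iio).eventuallyEq_of_mem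
      self_mem_nhdsWithin).symm).limUnder_eq
  have hint : ∫ t in (0 : ℝ)..x, iteratedDerivAvg φ (i + 1) t =
      ∫ t in (0 : ℝ)..x, iteratedDeriv (i + 1) φ t :=
    integral_congr_ae ((iteratedDerivAvg_ae_eq (i + 1)).mono fun _ h _ => h)
  rcases eq_or_ne x 0 with rfl | hx
  · simp only [refAct_apply_zero, mul_zero, add_zero, integral_same]
  · rw [hint, iteratedDerivAvg, Function.update_of_ne hx, Function.update_self, deltaK, hlimpos,
      hlimneg, heq x hx]

end Activation

/-- for an activation `φ` and `m ∈ ℕ`, the function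
`φ_m = φ − Σ_{k<m} Δ_k(φ) s_k` is `m` times pseudo-differentiable with `m`-fold
pseudo-derivative in `L²(γ)`. -/
theorem activation_smoothing (φ : ℝ → ℝ) (hφ : IsActivation φ) (m : ℕ) :
    ∃ g : ℝ → ℝ,
      IsIterPseudoDeriv m
        (fun x => φ x - ∑ k ∈ Finset.range m, deltaK φ k * refAct k x) g ∧
      MemLp g 2 stdGaussian := by
  obtain ⟨hpos, hneg, hbpos, hbneg, h0, -⟩ := hφ
  refine ⟨iteratedDerivAvg φ m, ?_, memLp_iteratedDerivAvg hpos hneg hbpos hbneg m 2 one_ne_zero⟩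
  simpa only [iteratedDerivAvg_zero h0] using isIterPseudoDeriv_sub_sum_refAct
    (locallyIntegrable_iteratedDerivAvg hpos hneg hbpos hbneg)
    (iteratedDerivAvg_eq_jump_add_integral hpos hneg hbpos hbneg) m
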